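/- arXiv:1111.4244 — 2 statements merged into one kernel-verified Lean document; each statement's English description precedes it below -/
import Mathlib

section
/- Under the assumptions that X₁,…,Xₙ are mutually independent and Y₁,…,Yₙ are conditionally independent given (X₁,…,Xₙ), for any A ⊆ {1,…,n} and a ∉ A, the marginal difference satisfies F(A ∪ {a}) − F(A) = H(X_a | X_A) − H(X_a | Y_{(A∪{a})ᶜ}, X_{(A∪{a})ᶜ}) − H(Y_a | Y_{(A∪{a})ᶜ}, X_{Aᶜ}) + H(Y_a | X_{{1,…,n}}), where F(A) = I(X_A ; Y_{Aᶜ} | X_{Aᶜ}). -/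
/-!
Expanding every conditional entropy into joint entropies gives
`F(A) = H(X) - H(X_{Aᶜ}) + H(Y_{Aᶜ}, X_{Aᶜ}) - H(Y_{Aᶜ}, X)`, and with `B = (A ∪ {a})ᶜ` the
identity reduces to `H(X_a, X_A) = H(X_a) + H(X_A)`, `H(X_{Aᶜ}) = H(X_a) + H(X_B)` and
`H(Y_{Aᶜ}, X) + H(X) = H(Y_a, X) + H(Y_B, X)`.

Since `H(Z) = -∑ ω, μ ω log p_Z(Z ω)`, entropy only sees the partition of `Ω` into the fibres of
`Z`, and such additivity identities follow from multiplicative identities between the masses of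
the fibres through a point of positive weight. Those come from marginalising the product formulas:
summing `∏ i, p i (x i)` over the coordinates outside `S` leaves `∏ i ∈ S, p i (x i)`, for the law
of `X` and for the conditional law of `Y` given `X = x`.
-/

open Finset

/-- Probability that the random variable `Z` takes the value `z`. -/
noncomputable def prob' {Ω : Type*} [Fintype Ω] (μ : Ω → ℝ) {α : Type*} [DecidableEq α]
    (Z : Ω → α) (z : α) : ℝ :=
  ∑ ω ∈ Finset.univ.filter (fun ω => Z ω = z), μ ω

/-- Shannon entropy (base 2) of a finitely-valued random variable. -/
noncomputable def ent' {Ω : Type*} [Fintype Ω] (μ : Ω → ℝ) {α : Type*} [Fintype α]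
    [DecidableEq α] (Z : Ω → α) : ℝ :=
  -∑ z : α, prob' μ Z z * Real.logb 2 (prob' μ Z z)

/-- Conditional Shannon entropy `H(Z | W) = H(Z, W) − H(W)`. -/
noncomputable def condEnt' {Ω : Type*} [Fintype Ω] (μ : Ω → ℝ) {α β : Type*}
    [Fintype α] [DecidableEq α] [Fintype β] [DecidableEq β]
    (Z : Ω → α) (W : Ω → β) : ℝ :=
  ent' μ (fun ω => (Z ω, W ω)) - ent' μ W

/-- Conditional mutual information `I(X ; Y | Z) = H(X|Z) + H(Y|Z) − H(X,Y|Z)`. -/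
noncomputable def condMI' {Ω : Type*} [Fintype Ω] (μ : Ω → ℝ) {α β γ : Type*}
    [Fintype α] [DecidableEq α] [Fintype β] [DecidableEq β] [Fintype γ] [DecidableEq γ]
    (X : Ω → α) (Y : Ω → β) (Z : Ω → γ) : ℝ :=
  condEnt' μ X Z + condEnt' μ Y Z - condEnt' μ (fun ω => (X ω, Y ω)) Z

set_option linter.unusedSectionVars false

section Entropy

variable {Ω : Type*} [Fintype Ω] (μ : Ω → ℝ) {α β γ δ : Type*}
  [Fintype α] [DecidableEq α] [Fintype β] [DecidableEq β]
  [Fintype γ] [DecidableEq γ] [Fintype δ] [DecidableEq δ]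

lemma sum_prob' (Z : Ω → α) : ∑ z, prob' μ Z z = ∑ ω, μ ω :=
  sum_fiberwise _ _ _

lemma prob'_apply_self_pos (hμ0 : ∀ ω, 0 ≤ μ ω) {ω : Ω} (hω : 0 < μ ω) (Z : Ω → α) :
    0 < prob' μ Z (Z ω) :=
  hω.trans_le (single_le_sum (fun ω' _ => hμ0 ω') (by simp))

lemma prob'_apply_self_congr {Z : Ω → α} {W : Ω → β}
    (h : ∀ ω ω', Z ω = Z ω' ↔ W ω = W ω') (ω : Ω) :
    prob' μ Z (Z ω) = prob' μ W (W ω) := by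
  unfold prob'
  congr 1
  ext ω'
  simp [h]

lemma prob'_comp_eq_sum (g : α → β) (Z : Ω → α) (b : β) :
    prob' μ (fun ω => g (Z ω)) b = ∑ z with g z = b, prob' μ Z z := by
  unfold prob'
  rw [← sum_fiberwise_of_maps_to (g := Z) (t := univ.filter (g · = b)) (by simp)]
  refine sum_congr rfl fun z hz => ?_
  rw [filter_filter]
  congr 1
  ext ω
  grind

lemma prob'_pair_eq_prob'_ite (Z : Ω → α) (W : Ω → β) (z : α) (w : β) :
    prob' μ (fun ω => (Z ω, W ω)) (z, w) = prob' (fun ω => if W ω = w then μ ω else 0) Z z := by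
  simp only [prob', sum_filter, Prod.mk.injEq, ite_and]

lemma prob'_eq_sum_ite (W : Ω → β) (w : β) :
    prob' μ W w = ∑ ω, if W ω = w then μ ω else 0 :=
  sum_filter _ _

lemma prob'_pair_swap (Z : Ω → α) (W : Ω → β) (z : α) (w : β) :
    prob' μ (fun ω => (W ω, Z ω)) (w, z) = prob' μ (fun ω => (Z ω, W ω)) (z, w) := by
  simp only [prob', Prod.mk.injEq, and_comm]

lemma prob'_const (c : α) : prob' μ (fun _ => c) c = ∑ ω, μ ω := by
  simp [prob']

lemma ent'_eq_neg_sum_mul_logb (Z : Ω → α) :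
    ent' μ Z = -∑ ω, μ ω * Real.logb 2 (prob' μ Z (Z ω)) := by
  rw [ent', ← sum_fiberwise univ Z]
  congr 1
  refine sum_congr rfl fun z _ => ?_
  rw [sum_congr rfl fun ω hω => by rw [(mem_filter.mp hω).2], ← sum_mul]
  rfl

lemma ent'_congr {Z : Ω → α} {W : Ω → β} (h : ∀ ω ω', Z ω = Z ω' ↔ W ω = W ω') :
    ent' μ Z = ent' μ W := by
  simp only [ent'_eq_neg_sum_mul_logb, prob'_apply_self_congr μ h]

lemma ent'_add_ent'_eq_of_prob'_mul_eq (hμ0 : ∀ ω, 0 ≤ μ ω)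
    {Z₁ : Ω → α} {Z₂ : Ω → β} {W₁ : Ω → γ} {W₂ : Ω → δ}
    (h : ∀ ω, 0 < μ ω → prob' μ Z₁ (Z₁ ω) * prob' μ Z₂ (Z₂ ω)
      = prob' μ W₁ (W₁ ω) * prob' μ W₂ (W₂ ω)) :
    ent' μ Z₁ + ent' μ Z₂ = ent' μ W₁ + ent' μ W₂ := by
  simp only [ent'_eq_neg_sum_mul_logb, ← neg_add, ← sum_add_distrib, ← mul_add]
  congr 1
  refine sum_congr rfl fun ω _ => ?_
  rcases (hμ0 ω).eq_or_lt with hω | hω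
  · simp [← hω]
  rw [← Real.logb_mul (prob'_apply_self_pos μ hμ0 hω Z₁).ne' (prob'_apply_self_pos μ hμ0 hω Z₂).ne',
    ← Real.logb_mul (prob'_apply_self_pos μ hμ0 hω W₁).ne' (prob'_apply_self_pos μ hμ0 hω W₂).ne',
    h ω hω]

lemma ent'_eq_add_of_indep (hμ0 : ∀ ω, 0 ≤ μ ω) (hμ1 : ∑ ω, μ ω = 1)
    {Z : Ω → α} {W₁ : Ω → β} {W₂ : Ω → γ}
    (h : ∀ ω, 0 < μ ω → prob' μ Z (Z ω) = prob' μ W₁ (W₁ ω) * prob' μ W₂ (W₂ ω)) :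
    ent' μ Z = ent' μ W₁ + ent' μ W₂ := by
  have hconst : ent' μ (fun _ => ()) = 0 := by simp [ent', prob'_const, hμ1]
  rw [← ent'_add_ent'_eq_of_prob'_mul_eq μ hμ0 (Z₂ := fun _ => ()) (by simpa [prob'_const, hμ1]),
    hconst, add_zero]

lemma sum_filter_prod_eq_prod {ι : Type*} [Fintype ι] [DecidableEq ι] (p : ι → α → ℝ)
    (hp : ∀ i, ∑ v, p i v = 1) (T : Finset ι) (w : ι → α) :
    ∑ x : ι → α with ∀ i ∈ T, x i = w i, ∏ i, p i (x i) = ∏ i ∈ T, p i (w i) := by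
  have hfilter : univ.filter (fun x : ι → α => ∀ i ∈ T, x i = w i)
      = Fintype.piFinset fun i => if i ∈ T then {w i} else univ := by
    ext x
    simp only [mem_filter, mem_univ, true_and, Fintype.mem_piFinset]
    refine forall_congr' fun i => ?_
    split_ifs with hi <;> simp [hi]
  rw [hfilter, ← prod_univ_sum, ← univ_inter T, ← prod_ite_mem univ T]
  exact prod_congr rfl fun i _ => by by_cases hi : i ∈ T <;> simp [hi, hp]

end Entropy

section Families

variable {Ω : Type*} [Fintype Ω] (μ : Ω → ℝ) {ι α β : Type*} [Fintype ι] [DecidableEq ι]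
  [Fintype α] [DecidableEq α] [Fintype β] [DecidableEq β]

lemma prob'_restrict_eq_mul_prod {X : ι → Ω → α} {c : ℝ} (p : ι → α → ℝ)
    (hp : ∀ i, ∑ v, p i v = 1) (h : ∀ x, prob' μ (fun ω i => X i ω) x = c * ∏ i, p i (x i))
    (S : Finset ι) (x : ι → α) :
    prob' μ (fun ω (i : {i // i ∈ S}) => X i ω) (fun i => x i) = c * ∏ i ∈ S, p i (x i) := by
  rw [prob'_comp_eq_sum μ (fun (x : ι → α) (i : {i // i ∈ S}) => x i) (fun ω i => X i ω)]
  simp only [funext_iff, Subtype.forall, h, ← mul_sum]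
  rw [sum_filter_prod_eq_prod p hp]

lemma prob'_restrict_eq_prod_of_iIndep (hμ1 : ∑ ω, μ ω = 1) {X : ι → Ω → α}
    (hX : ∀ x, prob' μ (fun ω i => X i ω) x = ∏ i, prob' μ (X i) (x i))
    (S : Finset ι) (x : ι → α) :
    prob' μ (fun ω (i : {i // i ∈ S}) => X i ω) (fun i => x i) = ∏ i ∈ S, prob' μ (X i) (x i) := by
  simpa using prob'_restrict_eq_mul_prod μ (c := 1) (fun i => prob' μ (X i))
    (fun i => by rw [sum_prob', hμ1]) (by simpa using hX) S x

lemma prob'_restrict_pair_eq_mul_prod_div {X : ι → Ω → α} {Y : ι → Ω → β} {x : ι → α}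
    [Nonempty ι] (hx : prob' μ (fun ω i => X i ω) x ≠ 0)
    (hY : ∀ y, prob' μ (fun ω => ((fun i => X i ω), (fun j => Y j ω))) (x, y) *
          (prob' μ (fun ω i => X i ω) x) ^ (Fintype.card ι - 1)
        = ∏ j, prob' μ (fun ω => (Y j ω, fun i => X i ω)) (y j, x))
    (S : Finset ι) (y : ι → β) :
    prob' μ (fun ω => ((fun j : {j // j ∈ S} => Y j ω), fun i => X i ω)) (fun j => y j, x)
      = prob' μ (fun ω i => X i ω) x *
        ∏ j ∈ S, prob' μ (fun ω => (Y j ω, fun i => X i ω)) (y j, x)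
          / prob' μ (fun ω i => X i ω) x := by
  set px := prob' μ (fun ω i => X i ω) x
  simp only [prob'_pair_swap μ (fun ω j => Y j ω) (fun ω i => X i ω),
    prob'_pair_eq_prob'_ite μ _ (fun ω i => X i ω)] at hY ⊢
  -- conditioning on `X = x` is done by restricting the weight `μ` to that fibre, of mass `px`
  set μx : Ω → ℝ := fun ω => if (fun i => X i ω) = x then μ ω else 0
  have hμx : ∑ ω, μx ω = px := (prob'_eq_sum_ite μ _ x).symm
  have hjoint (y : ι → β) :
      prob' μx (fun ω j => Y j ω) y = px * ∏ j, prob' μx (Y j) (y j) / px := by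
    have hpow : px ^ Fintype.card ι = px * px ^ (Fintype.card ι - 1) := by
      rw [← pow_succ', Nat.sub_add_cancel Fintype.card_pos]
    rw [prod_div_distrib, ← hY y, prod_const, card_univ, hpow]
    field_simp
  exact prob'_restrict_eq_mul_prod μx (fun j v => prob' μx (Y j) v / px)
    (fun j => by rw [← sum_div, sum_prob', hμx, div_self hx]) hjoint S y

lemma restrict_insert_eq_iff (X : ι → Ω → α) {a : ι} {S : Finset ι} {ω ω' : Ω} :
    (fun i : {i // i ∈ insert a S} => X i ω) = (fun i : {i // i ∈ insert a S} => X i ω')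
      ↔ X a ω = X a ω' ∧
        (fun i : {i // i ∈ S} => X i ω) = fun i : {i // i ∈ S} => X i ω' := by
  simp [funext_iff]

lemma restrict_pair_compl_eq_iff (X : ι → Ω → α) {S : Finset ι} {ω ω' : Ω} :
    ((fun i : {i // i ∈ S} => X i ω), (fun i : {i // i ∈ Sᶜ} => X i ω))
        = ((fun i : {i // i ∈ S} => X i ω'), (fun i : {i // i ∈ Sᶜ} => X i ω'))
      ↔ (fun i => X i ω) = fun i => X i ω' := by
  simp [funext_iff, ← forall_and]

lemma condMI'_restrict_compl_eq (X : ι → Ω → α) (Y : ι → Ω → β) (S : Finset ι) :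
    condMI' μ (fun ω (i : {i // i ∈ S}) => X i ω) (fun ω (j : {j // j ∈ Sᶜ}) => Y j ω)
        (fun ω (i : {i // i ∈ Sᶜ}) => X i ω)
      = ent' μ (fun ω i => X i ω) - ent' μ (fun ω (i : {i // i ∈ Sᶜ}) => X i ω)
        + ent' μ (fun ω => ((fun j : {j // j ∈ Sᶜ} => Y j ω), fun i : {i // i ∈ Sᶜ} => X i ω))
        - ent' μ (fun ω => ((fun j : {j // j ∈ Sᶜ} => Y j ω), fun i => X i ω)) := by
  have hX : ent' μ (fun ω => ((fun i : {i // i ∈ S} => X i ω), fun i : {i // i ∈ Sᶜ} => X i ω))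
      = ent' μ (fun ω i => X i ω) :=
    ent'_congr μ fun ω ω' => restrict_pair_compl_eq_iff X
  have hXY : ent' μ (fun ω => (((fun i : {i // i ∈ S} => X i ω),
        fun j : {j // j ∈ Sᶜ} => Y j ω), fun i : {i // i ∈ Sᶜ} => X i ω))
      = ent' μ (fun ω => ((fun j : {j // j ∈ Sᶜ} => Y j ω), fun i => X i ω)) :=
    ent'_congr μ fun ω ω' => by
      simp only [Prod.mk.injEq, ← restrict_pair_compl_eq_iff X (S := S)]
      tauto
  simp only [condMI', condEnt', hX, hXY]
  ring

lemma ent'_restrict_insert_of_iIndep (hμ0 : ∀ ω, 0 ≤ μ ω) (hμ1 : ∑ ω, μ ω = 1)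
    {X : ι → Ω → α} (hX : ∀ x, prob' μ (fun ω i => X i ω) x = ∏ i, prob' μ (X i) (x i))
    {S : Finset ι} {a : ι} (ha : a ∉ S) :
    ent' μ (fun ω (i : {i // i ∈ insert a S}) => X i ω)
      = ent' μ (X a) + ent' μ (fun ω (i : {i // i ∈ S}) => X i ω) :=
  ent'_eq_add_of_indep μ hμ0 hμ1 fun ω _ => by
    rw [prob'_restrict_eq_prod_of_iIndep μ hμ1 hX _ (fun i => X i ω),
      prob'_restrict_eq_prod_of_iIndep μ hμ1 hX _ (fun i => X i ω), prod_insert ha]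

lemma ent'_restrict_insert_pair_of_condIndep (hμ0 : ∀ ω, 0 ≤ μ ω) [Nonempty ι]
    {X : ι → Ω → α} {Y : ι → Ω → β}
    (hY : ∀ (x : ι → α) (y : ι → β),
      prob' μ (fun ω => ((fun i => X i ω), (fun j => Y j ω))) (x, y) *
          (prob' μ (fun ω i => X i ω) x) ^ (Fintype.card ι - 1)
        = ∏ j, prob' μ (fun ω => (Y j ω, fun i => X i ω)) (y j, x))
    {S : Finset ι} {a : ι} (ha : a ∉ S) :
    ent' μ (fun ω => ((fun j : {j // j ∈ insert a S} => Y j ω), fun i => X i ω))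
        + ent' μ (fun ω i => X i ω)
      = ent' μ (fun ω => (Y a ω, fun i => X i ω))
        + ent' μ (fun ω => ((fun j : {j // j ∈ S} => Y j ω), fun i => X i ω)) :=
  ent'_add_ent'_eq_of_prob'_mul_eq μ hμ0 fun ω hω => by
    have hx := (prob'_apply_self_pos μ hμ0 hω (fun ω i => X i ω)).ne'
    rw [prob'_restrict_pair_eq_mul_prod_div μ hx (hY _) (insert a S) (fun j => Y j ω),
      prob'_restrict_pair_eq_mul_prod_div μ hx (hY _) S (fun j => Y j ω), prod_insert ha]
    field_simp

end Families

/-- Under independence of the `X`'s and conditional independence of the `Y`'s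
given all the `X`'s, the marginal difference of `F(A) = I(X_A ; Y_{Aᶜ} | X_{Aᶜ})`
satisfies
`F(A∪{a}) − F(A) = H(X_a|X_A) − H(X_a|Y_{(A∪a)ᶜ}, X_{(A∪a)ᶜ})
  − H(Y_a|Y_{(A∪a)ᶜ}, X_{Aᶜ}) + H(Y_a|X_{1..n})`. -/
theorem stmt_9 {Ω α β : Type*} [Fintype Ω] [Fintype α] [DecidableEq α]
    [Fintype β] [DecidableEq β] {n : ℕ}
    (μ : Ω → ℝ) (hμ0 : ∀ ω, 0 ≤ μ ω) (hμ1 : ∑ ω, μ ω = 1)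
    (X : Fin n → Ω → α) (Y : Fin n → Ω → β)
    (hX : ∀ x : Fin n → α,
      prob' μ (fun ω i => X i ω) x = ∏ i, prob' μ (X i) (x i))
    (hY : ∀ (x : Fin n → α) (y : Fin n → β),
      prob' μ (fun ω => ((fun i => X i ω), (fun j => Y j ω))) (x, y) *
          (prob' μ (fun ω i => X i ω) x) ^ (n - 1)
        = ∏ j, prob' μ (fun ω => (Y j ω, fun i => X i ω)) (y j, x))
    (F : Finset (Fin n) → ℝ)
    (hF : ∀ A : Finset (Fin n), F A =
      condMI' μ (fun ω (i : {i // i ∈ A}) => X i ω)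
        (fun ω (j : {j // j ∈ Aᶜ}) => Y j ω)
        (fun ω (i : {i // i ∈ Aᶜ}) => X i ω)) :
    ∀ (A : Finset (Fin n)) (a : Fin n), a ∉ A →
      F (insert a A) - F A =
        condEnt' μ (X a) (fun ω (i : {i // i ∈ A}) => X i ω)
        - condEnt' μ (X a) (fun ω =>
            ((fun j : {j // j ∈ (insert a A)ᶜ} => Y j ω),
             (fun i : {i // i ∈ (insert a A)ᶜ} => X i ω)))
        - condEnt' μ (Y a) (fun ω =>
            ((fun j : {j // j ∈ (insert a A)ᶜ} => Y j ω),
             (fun i : {i // i ∈ Aᶜ} => X i ω)))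
        + condEnt' μ (Y a) (fun ω (i : Fin n) => X i ω) := by
  intro A a ha
  have : Nonempty (Fin n) := ⟨a⟩
  rw [hF, hF, condMI'_restrict_compl_eq, condMI'_restrict_compl_eq]
  set B := (insert a A)ᶜ with hB
  have haB : a ∉ B := by simp [B]
  rw [← show insert a B = Aᶜ by rw [hB, compl_insert, insert_erase (mem_compl.2 ha)]]
  have hXA := ent'_restrict_insert_of_iIndep μ hμ0 hμ1 hX ha
  have hXB := ent'_restrict_insert_of_iIndep μ hμ0 hμ1 hX haB
  have hYB := ent'_restrict_insert_pair_of_condIndep μ hμ0 (by simpa only [Fintype.card_fin]) haB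
  have hXaA : ent' μ (fun ω => (X a ω, fun i : {i // i ∈ A} => X i ω))
      = ent' μ (fun ω (i : {i // i ∈ insert a A}) => X i ω) :=
    ent'_congr μ fun ω ω' => by simp only [Prod.mk.injEq, restrict_insert_eq_iff]
  have hXaB : ent' μ (fun ω => (X a ω, ((fun j : {j // j ∈ B} => Y j ω),
        fun i : {i // i ∈ B} => X i ω)))
      = ent' μ (fun ω => ((fun j : {j // j ∈ B} => Y j ω),
        fun i : {i // i ∈ insert a B} => X i ω)) :=
    ent'_congr μ fun ω ω' => by simp only [Prod.mk.injEq, restrict_insert_eq_iff]; tauto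
  have hYaB : ent' μ (fun ω => (Y a ω, ((fun j : {j // j ∈ B} => Y j ω),
        fun i : {i // i ∈ insert a B} => X i ω)))
      = ent' μ (fun ω => ((fun j : {j // j ∈ insert a B} => Y j ω),
        fun i : {i // i ∈ insert a B} => X i ω)) :=
    ent'_congr μ fun ω ω' => by simp only [Prod.mk.injEq, restrict_insert_eq_iff]; tauto
  simp only [condEnt']
  linarith
end

section
/- Let f : 2^V → ℝ be submodular with f(∅) = 0 and let B_f = {x ∈ ℝ^V : Σ_{i∈A} x(i) ≤ f(A) for all A ⊆ V, and Σ_{i∈V} x(i) = f(V)} be its base polytope. If x* minimizes ‖x‖₂ over B_f, then the set A* = {i ∈ V : x*(i) < 0} satisfies f(A*) = min_{A ⊆ V} f(A). -/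
/-!
Let `x` be the minimum-norm point of `B_f`. Call a set `A` tight if `x(A) = f(A)`; by
submodularity the tight sets form a lattice containing `∅` and `V`, so every `i` lies in a least
tight set `D i`. If some `j ∈ D i` had `x j > x i`, then no tight set separates `i` from `j`, and
moving a little mass from `j` to `i` would stay in `B_f` while decreasing the norm. Hence
`D i ⊆ A*` for `i ∈ A*`, so `A* = ⋃ D i` is tight, and for every `A`
`f(A*) = x(A*) ≤ x(A) ≤ f(A)`.
-/

open Finset Filter Topology

section

variable {V : Type*}

def submodularPolyhedron (f : Finset V → ℝ) : Set (V → ℝ) :=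
  {x | ∀ A, ∑ i ∈ A, x i ≤ f A}

def basePolytope [Fintype V] (f : Finset V → ℝ) : Set (V → ℝ) :=
  {x | x ∈ submodularPolyhedron f ∧ ∑ i, x i = f univ}

def tightSets (f : Finset V → ℝ) (x : V → ℝ) : Set (Finset V) :=
  {A | ∑ i ∈ A, x i = f A}

lemma sum_filter_neg_le_sum [Fintype V] (x : V → ℝ) (A : Finset V) :
    ∑ i ∈ univ.filter (fun i => x i < 0), x i ≤ ∑ i ∈ A, x i :=
  calc ∑ i ∈ univ.filter (fun i => x i < 0), x i
      ≤ ∑ i ∈ A.filter (fun i => x i < 0), x i :=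
        sum_le_sum_of_subset_of_nonpos' (filter_subset_filter _ (subset_univ A))
          fun i hi _ => (mem_filter.1 hi).2.le
    _ ≤ ∑ i ∈ A, x i :=
        sum_le_sum_of_subset_of_nonneg (filter_subset _ A) fun i _ hi => by simp_all

variable [DecidableEq V]

def IsSubmodular (f : Finset V → ℝ) : Prop :=
  ∀ A B, f (A ∪ B) + f (A ∩ B) ≤ f A + f B

variable {f : Finset V → ℝ} {x : V → ℝ} {i j : V}

lemma union_mem_and_inter_mem_tightSets (hsub : IsSubmodular f)
    (hx : x ∈ submodularPolyhedron f) {S T : Finset V}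
    (hS : S ∈ tightSets f x) (hT : T ∈ tightSets f x) :
    S ∪ T ∈ tightSets f x ∧ S ∩ T ∈ tightSets f x := by
  have := sum_union_inter (s₁ := S) (s₂ := T) (f := x)
  have := hx (S ∪ T)
  have := hx (S ∩ T)
  have := hsub S T
  simp only [tightSets, Set.mem_ofPred_eq] at *
  constructor <;> linarith

lemma sum_add_smul_single_sub_single (x : V → ℝ) (i j : V) (δ : ℝ) (A : Finset V) :
    ∑ k ∈ A, (x + δ • (Pi.single i 1 - Pi.single j 1 : V → ℝ)) k =
      ∑ k ∈ A, x k + δ * ((if i ∈ A then 1 else 0) - if j ∈ A then 1 else 0) := by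
  simp [sum_add_distrib, ← mul_sum, sum_sub_distrib]

variable [Fintype V]

lemma exists_minimal_mem_tightSets (hsub : IsSubmodular f) (hx : x ∈ basePolytope f) (i : V) :
    ∃ D ∈ tightSets f x, i ∈ D ∧ ∀ S ∈ tightSets f x, i ∈ S → D ⊆ S := by
  classical
  set F := univ.filter fun S => S ∈ tightSets f x ∧ i ∈ S
  have hD : F.inf id ∈ {S | S ∈ tightSets f x ∧ i ∈ S} :=
    inf_mem {S | S ∈ tightSets f x ∧ i ∈ S} ⟨hx.2, mem_univ i⟩
      (fun S hS T hT => ⟨(union_mem_and_inter_mem_tightSets hsub hx.1 hS.1 hT.1).2,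
        mem_inter.2 ⟨hS.2, hT.2⟩⟩)
      F id (fun S hS => (mem_filter.1 hS).2)
  exact ⟨F.inf id, hD.1, hD.2, fun S hS hiS => inf_le (f := id) (by simp [F, hS, hiS])⟩

lemma sum_sq_add_smul_single_sub_single (x : V → ℝ) (hij : i ≠ j) (δ : ℝ) :
    ∑ k, (x + δ • (Pi.single i 1 - Pi.single j 1 : V → ℝ)) k ^ 2 =
      ∑ k, x k ^ 2 + 2 * δ * (x i - x j + δ) := by
  have hpt : ∀ k, (x + δ • (Pi.single i 1 - Pi.single j 1 : V → ℝ)) k ^ 2 =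
      x k ^ 2 + ((Pi.single i (2 * δ * x i + δ ^ 2) : V → ℝ) k +
        (Pi.single j (δ ^ 2 - 2 * δ * x j) : V → ℝ) k) := by
    intro k
    simp only [Pi.add_apply, Pi.smul_apply, Pi.sub_apply, Pi.single_apply, smul_eq_mul]
    split_ifs with hki hkj <;> subst_vars
    · exact absurd rfl hij
    all_goals ring
  simp only [hpt, sum_add_distrib, Fintype.sum_pi_single']
  ring

lemma eventually_exchange_mem_basePolytope (hx : x ∈ basePolytope f)
    (hslack : ∀ A, i ∈ A → j ∉ A → ∑ k ∈ A, x k < f A) :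
    ∀ᶠ δ in 𝓝[>] (0 : ℝ), x + δ • (Pi.single i 1 - Pi.single j 1 : V → ℝ) ∈ basePolytope f := by
  have hpos : ∀ᶠ δ in 𝓝[>] (0 : ℝ), 0 < δ := self_mem_nhdsWithin
  have hA : ∀ A : Finset V, ∀ᶠ δ in 𝓝[>] (0 : ℝ),
      ∑ k ∈ A, (x + δ • (Pi.single i 1 - Pi.single j 1 : V → ℝ)) k ≤ f A := by
    intro A
    simp only [sum_add_smul_single_sub_single]
    have hxA := hx.1 A
    by_cases hiA : i ∈ A <;> by_cases hjA : j ∈ A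
    · exact Eventually.of_forall fun δ => by simp [hiA, hjA, hxA]
    · have hsmall : ∀ᶠ δ in 𝓝[>] (0 : ℝ), δ < f A - ∑ k ∈ A, x k :=
        nhdsWithin_le_nhds (eventually_lt_nhds (sub_pos.2 (hslack A hiA hjA)))
      exact hsmall.mono fun δ hδ => by simp only [hiA, hjA, if_true, if_false]; linarith
    · exact hpos.mono fun δ hδ => by simp only [hiA, hjA, if_true, if_false]; linarith
    · exact Eventually.of_forall fun δ => by simp [hiA, hjA, hxA]
  filter_upwards [eventually_all.2 hA] with δ hδ
  refine ⟨hδ, ?_⟩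
  rw [sum_add_smul_single_sub_single]
  simp [hx.2]

lemma le_of_forall_mem_tightSets (hx : x ∈ basePolytope f)
    (hmin : IsMinOn (fun y => ∑ k, y k ^ 2) (basePolytope f) x)
    (hij : ∀ S ∈ tightSets f x, i ∈ S → j ∈ S) : x j ≤ x i := by
  by_contra! hlt
  have hne : i ≠ j := by rintro rfl; exact hlt.false
  have hslack : ∀ A, i ∈ A → j ∉ A → ∑ k ∈ A, x k < f A := fun A hiA hjA =>
    (hx.1 A).lt_of_ne fun htight => hjA (hij A htight hiA)
  have hsmall : ∀ᶠ δ in 𝓝[>] (0 : ℝ), δ < x j - x i :=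
    nhdsWithin_le_nhds (eventually_lt_nhds (sub_pos.2 hlt))
  obtain ⟨δ, hmem, hδ, hδpos⟩ := ((eventually_exchange_mem_basePolytope hx hslack).and
    (hsmall.and (self_mem_nhdsWithin : ∀ᶠ δ in 𝓝[>] (0 : ℝ), 0 < δ))).exists
  have hle := isMinOn_iff.1 hmin _ hmem
  simp only [sum_sq_add_smul_single_sub_single x hne] at hle
  nlinarith

lemma filter_neg_mem_tightSets (hf0 : f ∅ = 0) (hsub : IsSubmodular f)
    (hx : x ∈ basePolytope f)
    (hmin : IsMinOn (fun y => ∑ k, y k ^ 2) (basePolytope f) x) :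
    univ.filter (fun i => x i < 0) ∈ tightSets f x := by
  choose D hD hiD hDmin using exists_minimal_mem_tightSets hsub hx
  set N := univ.filter fun i => x i < 0
  have hDN : ∀ i ∈ N, D i ⊆ N := fun i hi j hj => by
    simp only [N, mem_filter, mem_univ, true_and] at hi ⊢
    exact (le_of_forall_mem_tightSets hx hmin fun S hS hiS => hDmin i S hS hiS hj).trans_lt hi
  have hN : N.sup D = N :=
    le_antisymm (Finset.sup_le hDN) fun i hi => mem_sup.2 ⟨i, hi, hiD i⟩
  rw [← hN]
  exact sup_mem _ (by simp [tightSets, hf0])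
    (fun S hS T hT => (union_mem_and_inter_mem_tightSets hsub hx.1 hS hT).1) N D
    (fun i _ => hD i)

end

/-- Fujishige's minimum-norm-point theorem: if `x*` minimizes the Euclidean norm
over the base polytope `B_f` of a submodular function `f` with `f(∅)=0`, then
`A* = {i : x*(i) < 0}` is a minimizer of `f`. -/
theorem stmt_18 {V : Type*} [Fintype V] [DecidableEq V] (f : Finset V → ℝ)
    (hf0 : f ∅ = 0)
    (hsub : ∀ A B : Finset V, f (A ∪ B) + f (A ∩ B) ≤ f A + f B)
    (x : V → ℝ)
    (hxB : (∀ A : Finset V, ∑ i ∈ A, x i ≤ f A) ∧ ∑ i, x i = f Finset.univ)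
    (hmin : ∀ y : V → ℝ,
      ((∀ A : Finset V, ∑ i ∈ A, y i ≤ f A) ∧ ∑ i, y i = f Finset.univ) →
      Real.sqrt (∑ i, (x i) ^ 2) ≤ Real.sqrt (∑ i, (y i) ^ 2)) :
    ∀ A : Finset V, f (Finset.univ.filter (fun i => x i < 0)) ≤ f A := by
  have hnorm : IsMinOn (fun y => ∑ i, y i ^ 2) (basePolytope f) x :=
    isMinOn_iff.2 fun y hy => (Real.sqrt_le_sqrt_iff (by positivity)).1 (hmin y hy)
  intro A
  calc f (univ.filter fun i => x i < 0)
      = ∑ i ∈ univ.filter (fun i => x i < 0), x i :=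
        (filter_neg_mem_tightSets hf0 hsub hxB hnorm).symm
    _ ≤ ∑ i ∈ A, x i := sum_filter_neg_le_sum x A
    _ ≤ f A := hxB.1 A
end
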